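/- Let φ be a Leibniz 2-cocycle of the algebra NF^n with coefficients in itself. If φ(x_i, x_1, x_1)-cocycle conditions hold (i.e. d²φ = 0), then φ(x_i, x_2) = -[x_i, φ(x_1, x_1)] for 1 ≤ i ≤ n-1 and φ(x_n, x_2) = 0. -/
import Mathlib


variable (K : Type*) [Field K] [CharZero K]

/-- The bracket of the null-filiform Leibniz algebra `NF^n` in the (zero-indexed)
basis `x_{i+1} = Pi.single i 1`: `[x_i, x_1] = x_{i+1}`, all other products of
basis vectors zero. -/
def nfF (n : ℕ) (u v : Fin n → K) : Fin n → K :=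
  fun k => if h : 0 < (k : ℕ) then
    v ⟨0, k.pos⟩ * u ⟨(k : ℕ) - 1, lt_of_le_of_lt (Nat.sub_le _ _) k.isLt⟩
  else 0

/-- The bracket of `NF^n` as a bilinear map. -/
noncomputable def nfb (n : ℕ) :
    (Fin n → K) →ₗ[K] (Fin n → K) →ₗ[K] (Fin n → K) :=
  LinearMap.mk₂ K (nfF K n)
    (fun u u' v => by funext k; simp only [nfF, Pi.add_apply]; split_ifs <;> ring)
    (fun c u v => by
      funext k; simp only [nfF, Pi.smul_apply, smul_eq_mul]; split_ifs <;> ring)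
    (fun u v v' => by funext k; simp only [nfF, Pi.add_apply]; split_ifs <;> ring)
    (fun c u v => by
      funext k; simp only [nfF, Pi.smul_apply, smul_eq_mul]; split_ifs <;> ring)

/-- The Leibniz 2-cocycle condition `d²φ = 0` on `NF^n` with coefficients in itself. -/
def IsCocycle (n : ℕ) (φ : (Fin n → K) →ₗ[K] (Fin n → K) →ₗ[K] (Fin n → K)) : Prop :=
  ∀ x y z : Fin n → K,
    nfb K n x (φ y z) - nfb K n (φ x y) z + nfb K n (φ x z) y
      + φ x (nfb K n y z) - φ (nfb K n x y) z + φ (nfb K n x z) y = 0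

/-- The space `ZL²(NF^n, NF^n)` of Leibniz 2-cocycles. -/
noncomputable def ZL2 (n : ℕ) :
    Submodule K ((Fin n → K) →ₗ[K] (Fin n → K) →ₗ[K] (Fin n → K)) where
  carrier := {φ | IsCocycle K n φ}
  add_mem' := by
    intro φ ψ hφ hψ x y z
    have h1 := hφ x y z
    have h2 := hψ x y z
    simp only [LinearMap.add_apply, map_add] at *
    linear_combination h1 + h2
  zero_mem' := by intro x y z; simp
  smul_mem' := by
    intro c φ hφ x y z
    have h := hφ x y z
    simp only [LinearMap.smul_apply, map_smul] at *
    linear_combination (norm := module) c • h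

/-- if `φ` is a Leibniz 2-cocycle of `NF^n` (i.e. `d²φ = 0`), then
`φ(x_i, x_2) = -[x_i, φ(x_1, x_1)]` for `1 ≤ i ≤ n-1` and `φ(x_n, x_2) = 0`
(zero-indexed below: `x_1 = Pi.single 0 1`, `x_2 = Pi.single 1 1`). -/
theorem cocycle_values_at_x2 (n : ℕ) (hn : 2 ≤ n)
    (φ : (Fin n → K) →ₗ[K] (Fin n → K) →ₗ[K] (Fin n → K))
    (hφ : IsCocycle K n φ) :
    (∀ i : Fin n, (i : ℕ) < n - 1 →
      φ (Pi.single i 1) (Pi.single ⟨1, by omega⟩ 1)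
        = - nfb K n (Pi.single i 1)
            (φ (Pi.single ⟨0, by omega⟩ 1) (Pi.single ⟨0, by omega⟩ 1))) ∧
    φ (Pi.single (⟨n - 1, by omega⟩ : Fin n) 1) (Pi.single ⟨1, by omega⟩ 1) = 0 := by
  set e0 : Fin n → K := Pi.single ⟨0, by omega⟩ 1 with he0
  set e1 : Fin n → K := Pi.single ⟨1, by omega⟩ 1 with he1
  have h01 : nfb K n e0 e0 = e1 := by
    funext k
    simp only [nfb, LinearMap.mk₂_apply, nfF, he0, he1, Pi.single_apply]
    rcases k with ⟨k, hk⟩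
    by_cases h : 0 < k
    · rw [dif_pos h]
      simp only [Fin.mk.injEq]
      split_ifs <;> simp_all <;> omega
    · rw [dif_neg h]
      simp only [Fin.mk.injEq]
      rw [if_neg (by omega)]
  have key : ∀ x : Fin n → K, φ x e1 = - nfb K n x (φ e0 e0) := by
    intro x
    have h := hφ x e0 e0
    rw [h01] at h
    linear_combination (norm := module) h
  constructor
  · intro i _
    exact key _
  · rw [key]
    have : nfb K n (Pi.single (⟨n - 1, by omega⟩ : Fin n) (1:K)) (φ e0 e0) = 0 := by
      funext k
      simp only [nfb, LinearMap.mk₂_apply, nfF, Pi.single_apply, Pi.zero_apply]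
      rcases k with ⟨k, hk⟩
      by_cases h : 0 < k
      · rw [dif_pos h]
        simp only [Fin.mk.injEq]
        rw [if_neg (by omega), mul_zero]
      · rw [dif_neg h]
    rw [this, neg_zero]
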